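/- Let γ : List ℕ → ℕ be a neighbourhood function of Y : (ℕ → ℕ) → ℕ whose bar S_γ satisfies bar induction. Then the restriction of Y to the Cantor space is uniformly continuous: there exists n such that for all binary sequences α, β (i.e., all values ≤ 1), if α and β agree on the first n values, then Y(α) = Y(β). -/
import Mathlib


/-- Initial segment of length `n` of `α`. -/
def seg (α : ℕ → ℕ) (n : ℕ) : List ℕ := List.ofFn fun i : Fin n => α i

/-- `γ` is a neighbourhood function. -/
def IsNbhd (γ : List ℕ → ℕ) : Prop :=
  (∀ α : ℕ → ℕ, ∃ n, 0 < γ (seg α n)) ∧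
  (∀ a : List ℕ, 0 < γ a → ∀ b : List ℕ, γ (a ++ b) = γ a)

/-- `γ` is a neighbourhood function of `f`. -/
def NbhdOf (γ : List ℕ → ℕ) (f : (ℕ → ℕ) → ℕ) : Prop :=
  IsNbhd γ ∧ ∀ (α : ℕ → ℕ) (n : ℕ), 0 < γ (seg α n) → f α = γ (seg α n) - 1

/-- `Q` is inductive. -/
def Ind (Q : List ℕ → Prop) : Prop := ∀ a : List ℕ, (∀ n : ℕ, Q (a ++ [n])) → Q a

lemma seg_succ (α : ℕ → ℕ) (n : ℕ) : seg α (n + 1) = seg α n ++ [α n] := by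
  simp only [seg, List.ofFn_succ', Fin.last, List.concat_eq_append]
  rfl

theorem stmt12 (γ : List ℕ → ℕ) (Y : (ℕ → ℕ) → ℕ) (hγ : NbhdOf γ Y)
    (hBI : ∀ Q : List ℕ → Prop, (∀ a, 0 < γ a → Q a) → Ind Q → Q []) :
    ∃ n : ℕ, ∀ α β : ℕ → ℕ, (∀ i, α i ≤ 1) → (∀ i, β i ≤ 1) →
      (∀ i < n, α i = β i) → Y α = Y β := by
  set Q : List ℕ → Prop := fun a =>
    ∃ n : ℕ, ∀ α β : ℕ → ℕ, (∀ i, α i ≤ 1) → (∀ i, β i ≤ 1) →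
      seg α a.length = a → seg β a.length = a →
      (∀ i < n, α i = β i) → Y α = Y β with hQ
  have hbase : ∀ a, 0 < γ a → Q a := by
    intro a ha
    refine ⟨0, fun α β _ _ hα hβ _ => ?_⟩
    have h1 : Y α = γ a - 1 := by
      have := hγ.2 α a.length (by rw [hα]; exact ha)
      rwa [hα] at this
    have h2 : Y β = γ a - 1 := by
      have := hγ.2 β a.length (by rw [hβ]; exact ha)
      rwa [hβ] at this
    rw [h1, h2]
  have hind : Ind Q := by
    intro a hm
    obtain ⟨n0, h0⟩ := hm 0
    obtain ⟨n1, h1⟩ := hm 1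
    refine ⟨max (a.length + 1) (max n0 n1), fun α β hαb hβb hα hβ hag => ?_⟩
    have hlt : a.length < max (a.length + 1) (max n0 n1) :=
      lt_of_lt_of_le (Nat.lt_succ_self _) (le_max_left _ _)
    have heq : β a.length = α a.length := (hag a.length hlt).symm
    have hsegα : seg α (a.length + 1) = a ++ [α a.length] := by
      rw [seg_succ, hα]
    have hsegβ : seg β (a.length + 1) = a ++ [α a.length] := by
      rw [seg_succ, hβ, heq]
    have hlen : (a ++ [α a.length]).length = a.length + 1 := by simp
    rcases Nat.le_one_iff_eq_zero_or_eq_one.mp (hαb a.length) with h | h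
    · exact h0 α β hαb hβb (by simp only [List.length_append, List.length_singleton]; rw [hsegα, h]) (by simp only [List.length_append, List.length_singleton]; rw [hsegβ, h])
        (fun i hi => hag i (lt_of_lt_of_le hi (le_trans (le_max_left _ _) (le_max_right _ _))))
    · exact h1 α β hαb hβb (by simp only [List.length_append, List.length_singleton]; rw [hsegα, h]) (by simp only [List.length_append, List.length_singleton]; rw [hsegβ, h])
        (fun i hi => hag i (lt_of_lt_of_le hi (le_trans (le_max_right _ _) (le_max_right _ _))))
  obtain ⟨n, hn⟩ := hBI Q hbase hind
  exact ⟨n, fun α β hα hβ hag => hn α β hα hβ rfl rfl hag⟩
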